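/- arXiv:2102.11485 — 2 statements merged into one kernel-verified Lean document; each statement's English description precedes it below -/
import Mathlib

section
/- Let n, k be natural numbers and f : Matrix (Fin n) (Fin n) ℝ → Matrix (Fin n) (Fin k) ℝ be equivariant, i.e., f(π • Z) = π • f(Z) for every permutation π and every Z. Let X : Matrix (Fin n) (Fin n) ℝ be such that its automorphism group acts transitively on nodes, i.e., for all i, j : Fin n there exists a permutation τ with τ • X = X and τ i = j. Then all rows of f(X) are equal: for all i, j : Fin n and c : Fin k, (f X) i c = (f X) j c. (An equivariant GNN must assign the same prediction to every node of a vertex-transitive graph, so it cannot output any nontrivial node subset such as a maximum independent set.) -/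
/-- Action of a permutation on an adjacency matrix: `(π • X) i j = X (π⁻¹ i) (π⁻¹ j)`. -/
def permX {n : ℕ} (π : Equiv.Perm (Fin n)) (X : Matrix (Fin n) (Fin n) ℝ) :
    Matrix (Fin n) (Fin n) ℝ :=
  fun i j => X (π⁻¹ i) (π⁻¹ j)

/-- Action of a permutation on an output matrix: `(π • Y) i c = Y (π⁻¹ i) c`. -/
def permY {n k : ℕ} (π : Equiv.Perm (Fin n)) (Y : Matrix (Fin n) (Fin k) ℝ) :
    Matrix (Fin n) (Fin k) ℝ :=
  fun i c => Y (π⁻¹ i) c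

theorem row_eq_of_permX_eq {n k : ℕ}
    {f : Matrix (Fin n) (Fin n) ℝ → Matrix (Fin n) (Fin k) ℝ}
    (hequiv : ∀ (π : Equiv.Perm (Fin n)) (Z : Matrix (Fin n) (Fin n) ℝ),
      f (permX π Z) = permY π (f Z))
    {X : Matrix (Fin n) (Fin n) ℝ} {τ : Equiv.Perm (Fin n)} (hτ : permX τ X = X)
    (i : Fin n) (c : Fin k) : f X (τ i) c = f X i c := by
  conv_lhs => rw [← hτ, hequiv]
  simp [permY]

theorem stmt_7 (n k : ℕ)
    (f : Matrix (Fin n) (Fin n) ℝ → Matrix (Fin n) (Fin k) ℝ)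
    (hequiv : ∀ (π : Equiv.Perm (Fin n)) (Z : Matrix (Fin n) (Fin n) ℝ),
      f (permX π Z) = permY π (f Z))
    (X : Matrix (Fin n) (Fin n) ℝ)
    (htrans : ∀ i j : Fin n, ∃ τ : Equiv.Perm (Fin n), permX τ X = X ∧ τ i = j) :
    ∀ (i j : Fin n) (c : Fin k), f X i c = f X j c := by
  intro i j c
  obtain ⟨τ, hτX, rfl⟩ := htrans i j
  exact (row_eq_of_permX_eq hequiv hτX i c).symm
end

section
/- Let n ≥ 3 and let X : Matrix (Fin n) (Fin n) ℝ be the adjacency matrix of the n-cycle, i.e., X i j = 1 if j = i + 1 or i = j + 1 (addition in Fin n, i.e., modulo n) and X i j = 0 otherwise. Then the rotation permutation r : Fin n → Fin n, r i = i + 1, satisfies r • X = X, and consequently for any equivariant function f : Matrix (Fin n) (Fin n) ℝ → Matrix (Fin n) (Fin k) ℝ (i.e., f(π • Z) = π • f(Z) for all π and Z), all rows of f(X) are equal. (This generalizes the paper's C₄ example: an equivariant GNN cannot predict any maximum independent set of a cycle because auto-isomorphism ties the output of all nodes.) -/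
/-! An automorphism `π` of the input fixes the output of an equivariant `f`, so `f X` is constant
along the orbits of `π`; the rotation of the cycle has a single orbit. -/

section

variable {n k : ℕ}

theorem permY_eq_self_of_permX_eq_self
    {f : Matrix (Fin n) (Fin n) ℝ → Matrix (Fin n) (Fin k) ℝ}
    (hf : ∀ (π : Equiv.Perm (Fin n)) (Z : Matrix (Fin n) (Fin n) ℝ), f (permX π Z) = permY π (f Z))
    {π : Equiv.Perm (Fin n)} {X : Matrix (Fin n) (Fin n) ℝ} (hX : permX π X = X) :
    permY π (f X) = f X := by
  rw [← hf, hX]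

theorem Fin.apply_eq_apply_of_apply_add_one [NeZero n] {α : Type*} {g : Fin n → α}
    (hg : ∀ i, g (i + 1) = g i) (i j : Fin n) : g i = g j := by
  open Fin.NatCast in
  have h_zero : ∀ m : ℕ, g (m : Fin n) = g 0 := by
    intro m
    induction m with
    | zero => simp
    | succ m ih => rw [Nat.cast_succ, hg, ih]
  rw [← Fin.cast_val_eq_self i, ← Fin.cast_val_eq_self j, h_zero, h_zero]

theorem inv_apply_eq_sub_one [NeZero n] {r : Equiv.Perm (Fin n)} (hr : ∀ i, r i = i + 1)
    (i : Fin n) : r⁻¹ i = i - 1 :=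
  r.symm_apply_eq.mpr (by rw [hr, sub_add_cancel])

theorem permX_eq_self_of_add_one_invariant [NeZero n] {r : Equiv.Perm (Fin n)}
    (hr : ∀ i, r i = i + 1) {X : Matrix (Fin n) (Fin n) ℝ}
    (hX : ∀ i j, X (i + 1) (j + 1) = X i j) : permX r X = X := by
  funext i j
  simpa only [permX, inv_apply_eq_sub_one hr, sub_add_cancel] using (hX (i - 1) (j - 1)).symm

end

theorem stmt_8_general (n k : ℕ) [NeZero n]
    (X : Matrix (Fin n) (Fin n) ℝ)
    (hX : ∀ i j : Fin n, X i j = if j = i + 1 ∨ i = j + 1 then (1 : ℝ) else 0)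
    (r : Equiv.Perm (Fin n)) (hr : ∀ i : Fin n, r i = i + 1) :
    permX r X = X ∧
      ∀ f : Matrix (Fin n) (Fin n) ℝ → Matrix (Fin n) (Fin k) ℝ,
        (∀ (π : Equiv.Perm (Fin n)) (Z : Matrix (Fin n) (Fin n) ℝ),
          f (permX π Z) = permY π (f Z)) →
        ∀ (i j : Fin n) (c : Fin k), f X i c = f X j c := by
  have hfix : permX r X = X :=
    permX_eq_self_of_add_one_invariant hr fun i j => by simp only [hX, add_left_inj]
  refine ⟨hfix, fun f hf i j c => ?_⟩
  have hrot (i : Fin n) : f X (i + 1) c = f X i c := by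
    have := congrFun (congrFun (permY_eq_self_of_permX_eq_self hf hfix) (i + 1)) c
    rwa [permY, inv_apply_eq_sub_one hr, add_sub_cancel_right, eq_comm] at this
  exact Fin.apply_eq_apply_of_apply_add_one (g := fun i => f X i c) hrot i j

theorem stmt_8 (n k : ℕ) [NeZero n] (hn : 3 ≤ n)
    (X : Matrix (Fin n) (Fin n) ℝ)
    (hX : ∀ i j : Fin n, X i j = if j = i + 1 ∨ i = j + 1 then (1 : ℝ) else 0)
    (r : Equiv.Perm (Fin n)) (hr : ∀ i : Fin n, r i = i + 1) :
    permX r X = X ∧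
      ∀ f : Matrix (Fin n) (Fin n) ℝ → Matrix (Fin n) (Fin k) ℝ,
        (∀ (π : Equiv.Perm (Fin n)) (Z : Matrix (Fin n) (Fin n) ℝ),
          f (permX π Z) = permY π (f Z)) →
        ∀ (i j : Fin n) (c : Fin k), f X i c = f X j c :=
  stmt_8_general n k X hX r hr
end
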